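/- arXiv:2204.00527 — 2 statements merged into one kernel-verified Lean document; each statement's English description precedes it below -/
import Mathlib

section
/- If Z is a Gaussian random variable with mean m and standard deviation σ > 0, and z* is a real number, then E[(z* - Z)^+] = (z* - m)Φ((z* - m)/σ) + σφ((z* - m)/σ), where Φ and φ are the standard normal CDF and PDF and (a)^+ = max(a, 0). -/
open MeasureTheory ProbabilityTheory

/-- The standard normal density. -/
noncomputable def stdNormalPDF (s : ℝ) : ℝ :=
  (Real.sqrt (2 * Real.pi))⁻¹ * Real.exp (-s ^ 2 / 2)

/-- The standard normal cumulative distribution function. -/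
noncomputable def stdNormalCDF (t : ℝ) : ℝ :=
  ∫ s in Set.Iic t, stdNormalPDF s

/-!
Writing `Z = σ T + m` with `T` standard normal and `c = (z* - m) / σ`, one has
`(z* - Z)⁺ = σ (c - T)⁺`, so it suffices to show `∫ φ(t) (c - t)⁺ dt = c Φ(c) + φ(c)`.
On `t ≤ c` the integrand is `c φ(t) - t φ(t)`, and since `φ' = -t φ` with `φ(-∞) = 0`,
`∫_{-∞}^c t φ(t) dt = -φ(c)`.
-/

open Real Set Filter Topology

lemma hasDerivAt_stdNormalPDF (s : ℝ) : HasDerivAt stdNormalPDF (-s * stdNormalPDF s) s := by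
  have h : HasDerivAt (fun s : ℝ => -s ^ 2 / 2) (-s) s :=
    ((hasDerivAt_pow 2 s).neg.div_const 2).congr_deriv (by ring)
  unfold stdNormalPDF
  exact (h.exp.const_mul (√(2 * π))⁻¹).congr_deriv (by ring)

lemma integrable_stdNormalPDF : Integrable stdNormalPDF := by
  refine ((integrable_exp_neg_mul_sq (b := 1 / 2) (by norm_num)).const_mul
    (√(2 * π))⁻¹).congr (ae_of_all _ fun s => ?_)
  simp only [stdNormalPDF]
  ring_nf

lemma integrable_mul_stdNormalPDF : Integrable fun s => s * stdNormalPDF s := by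
  refine ((integrable_mul_exp_neg_mul_sq (b := 1 / 2) (by norm_num)).const_mul
    (√(2 * π))⁻¹).congr (ae_of_all _ fun s => ?_)
  simp only [stdNormalPDF]
  ring_nf

lemma tendsto_stdNormalPDF_atBot : Tendsto stdNormalPDF atBot (𝓝 0) := by
  have hsq : Tendsto (fun s : ℝ => -s ^ 2 / 2) atBot atBot := by
    refine (tendsto_neg_atTop_atBot.comp ?_).atBot_div_const two_pos
    simpa only [Function.comp_def, neg_sq] using
      (tendsto_pow_atTop (α := ℝ) two_ne_zero).comp tendsto_neg_atBot_atTop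
  unfold stdNormalPDF
  simpa only [Function.comp_def, mul_zero] using
    (tendsto_exp_atBot.comp hsq).const_mul (√(2 * π))⁻¹

lemma setIntegral_Iic_mul_stdNormalPDF (c : ℝ) :
    ∫ s in Iic c, s * stdNormalPDF s = -stdNormalPDF c := by
  simpa using integral_Iic_of_hasDerivAt_of_tendsto' (f := -stdNormalPDF)
    (fun s _ => by simpa using (hasDerivAt_stdNormalPDF s).neg)
    integrable_mul_stdNormalPDF.integrableOn tendsto_stdNormalPDF_atBot.neg

lemma integral_stdNormalPDF_mul_max_sub (c : ℝ) :
    ∫ s, stdNormalPDF s * max (c - s) 0 = c * stdNormalCDF c + stdNormalPDF c := by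
  have hIic : ∫ s in Iic c, stdNormalPDF s * max (c - s) 0 =
      ∫ s, stdNormalPDF s * max (c - s) 0 :=
    setIntegral_eq_integral_of_forall_compl_eq_zero fun s hs => by
      rw [mem_Iic, not_le] at hs
      rw [max_eq_right (by linarith), mul_zero]
  have hmax : ∫ s in Iic c, stdNormalPDF s * max (c - s) 0 =
      ∫ s in Iic c, stdNormalPDF s * (c - s) :=
    setIntegral_congr_fun measurableSet_Iic fun s hs => by
      rw [max_eq_left (sub_nonneg.2 hs)]
  rw [← hIic, hmax]
  calc ∫ s in Iic c, stdNormalPDF s * (c - s)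
      = c * (∫ s in Iic c, stdNormalPDF s) - ∫ s in Iic c, s * stdNormalPDF s := by
        rw [← integral_const_mul,
          ← integral_sub (integrable_stdNormalPDF.const_mul c).integrableOn
            integrable_mul_stdNormalPDF.integrableOn]
        congr 1 with s
        ring
    _ = c * stdNormalCDF c + stdNormalPDF c := by
        rw [setIntegral_Iic_mul_stdNormalPDF, stdNormalCDF, sub_neg_eq_add]

lemma integral_gaussianReal_zero_one (f : ℝ → ℝ) :
    ∫ x, f x ∂gaussianReal 0 1 = ∫ x, stdNormalPDF x * f x := by
  rw [integral_gaussianReal_eq_integral_smul one_ne_zero]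
  congr 1 with x
  simp [stdNormalPDF, gaussianPDFReal]

lemma gaussianReal_map_mul_add (m σ : ℝ) :
    (gaussianReal 0 1).map (fun t => σ * t + m) = gaussianReal m (σ ^ 2).toNNReal := by
  have h : (fun t => σ * t + m) = (· + m) ∘ (σ * ·) := rfl
  rw [h, ← Measure.map_map (by fun_prop) (by fun_prop), gaussianReal_map_const_mul,
    gaussianReal_map_add_const]
  congr 1
  · ring
  · ext; simp [sq_nonneg]

lemma integral_max_sub_gaussianReal (m : ℝ) {σ : ℝ} (hσ : 0 < σ) (z : ℝ) :
    ∫ x, max (z - x) 0 ∂gaussianReal m (σ ^ 2).toNNReal =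
      (z - m) * stdNormalCDF ((z - m) / σ) + σ * stdNormalPDF ((z - m) / σ) := by
  have hscale : ∀ t, max (z - (σ * t + m)) 0 = σ * max ((z - m) / σ - t) 0 := fun t => by
    rw [mul_max_of_nonneg _ _ hσ.le, mul_zero, mul_sub, mul_div_cancel₀ _ hσ.ne']
    ring_nf
  rw [← gaussianReal_map_mul_add, integral_map (by fun_prop) (by fun_prop),
    integral_gaussianReal_zero_one]
  simp_rw [hscale, mul_left_comm _ σ, integral_const_mul, integral_stdNormalPDF_mul_max_sub]
  field_simp

theorem expected_improvement_closed_form_general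
    {Ω : Type*} [MeasurableSpace Ω] (μ : Measure Ω)
    (Z : Ω → ℝ) (m σ : ℝ) (hσ : 0 < σ)
    (hZ : μ.map Z = gaussianReal m (Real.toNNReal (σ ^ 2)))
    (zstar : ℝ) :
    ∫ ω, max (zstar - Z ω) 0 ∂μ =
      (zstar - m) * stdNormalCDF ((zstar - m) / σ) +
        σ * stdNormalPDF ((zstar - m) / σ) := by
  have hZm : AEMeasurable Z μ := aemeasurable_of_map_neZero (by rw [hZ]; infer_instance)
  rw [← integral_map (f := fun x => max (zstar - x) 0) hZm (by fun_prop), hZ,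
    integral_max_sub_gaussianReal m hσ]

/-- Closed-form expected improvement: if `Z ~ N(m, σ²)` with `σ > 0` and `z* ∈ ℝ`, then
`E[(z* - Z)⁺] = (z* - m) Φ((z* - m)/σ) + σ φ((z* - m)/σ)`. -/
theorem expected_improvement_closed_form
    {Ω : Type*} [MeasurableSpace Ω] (μ : Measure Ω) [IsProbabilityMeasure μ]
    (Z : Ω → ℝ) (m σ : ℝ) (hσ : 0 < σ)
    (hZ : μ.map Z = gaussianReal m (Real.toNNReal (σ ^ 2)))
    (zstar : ℝ) :
    ∫ ω, max (zstar - Z ω) 0 ∂μ =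
      (zstar - m) * stdNormalCDF ((zstar - m) / σ) +
        σ * stdNormalPDF ((zstar - m) / σ) :=
  expected_improvement_closed_form_general μ Z m σ hσ hZ zstar
end

section
/- For the Gaussian process Z obtained by averaging F over U, the one-step-ahead posterior mean m_Z^{(t+1)}(x) of Z at x (viewed before observing the new value F(x̃, ũ)) is Gaussian with mean m_Z^{(t)}(x) and variance (∫ k_F^{(t)}((x,u),(x̃,ũ)) ρ_U(u) du)² / k_F^{(t)}((x̃,ũ),(x̃,ũ)). -/
open MeasureTheory ProbabilityTheory

/-- The one-step-ahead posterior mean of the averaged process `Z` at `x`, namely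
`m_Z^{(t+1)}(x) = m_Z^{(t)}(x) + (∫ k_F^{(t)}((x,u),(x̃,ũ)) ρ(du)) k_F^{(t)}((x̃,ũ),(x̃,ũ))⁻¹
(F(x̃,ũ) - m_F^{(t)}(x̃,ũ))`, viewed before observing the new value `F(x̃,ũ)` (whose
posterior law is Gaussian with mean `m_F^{(t)}(x̃,ũ)` and variance
`k_F^{(t)}((x̃,ũ),(x̃,ũ)) > 0`), is Gaussian with mean `m_Z^{(t)}(x)` and variance
`(∫ k_F^{(t)}((x,u),(x̃,ũ)) ρ(du))² / k_F^{(t)}((x̃,ũ),(x̃,ũ))`. -/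
theorem one_step_ahead_posterior_mean_gaussian
    {Ω : Type*} [MeasurableSpace Ω] (μ : Measure Ω) [IsProbabilityMeasure μ]
    {d m : ℕ} (ρ : Measure (Fin m → ℝ)) [IsProbabilityMeasure ρ]
    (mF : (Fin d → ℝ) × (Fin m → ℝ) → ℝ)
    (kF : ((Fin d → ℝ) × (Fin m → ℝ)) → ((Fin d → ℝ) × (Fin m → ℝ)) → ℝ)
    (x : Fin d → ℝ) (xt : Fin d → ℝ) (ut : Fin m → ℝ)
    (v : NNReal) (hv : 0 < v) (hvk : kF (xt, ut) (xt, ut) = (v : ℝ))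
    (Fnew : Ω → ℝ) (hFnew : μ.map Fnew = gaussianReal (mF (xt, ut)) v)
    (hkint : Integrable (fun u => kF (x, u) (xt, ut)) ρ)
    (mZ : ℝ) (hmZ : mZ = ∫ u, mF (x, u) ∂ρ)
    (Mnext : Ω → ℝ)
    (hMnext : ∀ ω, Mnext ω =
      mZ + (∫ u, kF (x, u) (xt, ut) ∂ρ) * (kF (xt, ut) (xt, ut))⁻¹ *
        (Fnew ω - mF (xt, ut))) :
    μ.map Mnext =
      gaussianReal mZ
        (Real.toNNReal ((∫ u, kF (x, u) (xt, ut) ∂ρ) ^ 2 / kF (xt, ut) (xt, ut))) := by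
  set k := ∫ u, kF (x, u) (xt, ut) ∂ρ with hk
  set c := k * (kF (xt, ut) (xt, ut))⁻¹ with hc
  set b := mZ - c * mF (xt, ut) with hb
  have hae : AEMeasurable Fnew μ :=
    aemeasurable_of_map_neZero (by rw [hFnew]; infer_instance)
  have hM : Mnext = (fun y => c * y + b) ∘ Fnew := by
    funext ω; simp only [Function.comp, hMnext ω, hb, hc]; ring
  rw [hM, ← AEMeasurable.map_map_of_aemeasurable
      ((measurable_const_mul c).add_const b).aemeasurable hae, hFnew,
    show (fun y => c * y + b) = (fun y => y + b) ∘ (fun y => c * y) from rfl,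
    ← Measure.map_map (measurable_id'.add_const b) (measurable_const_mul c),
    gaussianReal_map_const_mul, gaussianReal_map_add_const]
  have hvne : (v : ℝ) ≠ 0 := ne_of_gt (by exact_mod_cast hv)
  congr 1
  · rw [hb]; ring
  · ext
    simp only [NNReal.coe_mul, NNReal.coe_mk]
    rw [hvk, Real.coe_toNNReal _ (by positivity), hc, hvk]
    field_simp
end
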